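/- Let χ be the substitution on {a,b} with χ(a) = aab and χ(b) = abb, and let X_χ be its substitution subshift. Then there exists a continuous surjection F : X_χ → X_χ satisfying F ∘ σ⁷ = σ ∘ F; that is, (X_χ, σ) is a topological factor of (X_χ, σ⁷). -/

import Mathlib

open Set Topology Classical

noncomputable section

/-- The left shift `σ` on bi-infinite sequences: `(σ x) n = x (n+1)`. -/
def shiftMap {A : Type} (x : ℤ → A) : ℤ → A := fun n => x (n + 1)

/-- The shift by an integer amount: `shiftZ n x = σ^n x`. -/
def shiftZ {A : Type} (n : ℤ) (x : ℤ → A) : ℤ → A := fun m => x (m + n)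

/-- A bi-infinite sequence is Toeplitz if every coordinate is periodically repeated. -/
def IsToeplitz {A : Type} (x : ℤ → A) : Prop :=
  ∀ i : ℤ, ∃ p : ℕ, 0 < p ∧ ∀ k : ℤ, x (i + k * (p : ℤ)) = x i

/-- The closure of the full shift orbit of `x`. -/
def orbitClosure {A : Type} [TopologicalSpace A] (x : ℤ → A) : Set (ℤ → A) :=
  closure {y | ∃ n : ℤ, shiftZ n x = y}

/-- The finite word `x_i x_{i+1} ⋯ x_{i+n-1}`. -/
def seqWord {A : Type} (x : ℤ → A) (i : ℤ) (n : ℕ) : List A :=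
  List.ofFn fun m : Fin n => x (i + (m : ℕ))

/-- Iterates `θ^k` of a substitution, applied to a letter. -/
def substPow {A : Type} (θ : A → List A) : ℕ → A → List A
  | 0, a => [a]
  | k + 1, a => (θ a).flatMap (substPow θ k)

/-- The substitution subshift of `θ`: all sequences whose finite subwords occur in
some `θ^k(a)`. -/
def substShift {A : Type} (θ : A → List A) : Set (ℤ → A) :=
  {x | ∀ i : ℤ, ∀ n : ℕ, ∃ (k : ℕ) (a : A), (seqWord x i n).IsInfix (substPow θ k a)}

/-- The full orbit of `x` under an (invertible) map `S`, within the set `X`. -/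
def orbitIn {α : Type} (S : α → α) (X : Set α) (x : α) : Set α :=
  {y | y ∈ X ∧ ∃ n : ℕ, S^[n] x = y ∨ S^[n] y = x}

/-- Every `S`-orbit within `X` is dense in `X`. -/
def MinimalOn {α : Type} [TopologicalSpace α] (S : α → α) (X : Set α) : Prop :=
  ∀ x ∈ X, X ⊆ closure (orbitIn S X x)

/-- Every `T`-orbit in `X` is the union of exactly `c` distinct `S`-orbits. -/
def OrbitNumberOn {α : Type} (T S : α → α) (X : Set α) (c : ℕ) : Prop :=
  ∀ x ∈ X, ∃ r : Fin c → α,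
    (∀ i, r i ∈ orbitIn T X x) ∧
    (∀ i j, i ≠ j → r j ∉ orbitIn S X (r i)) ∧
    (∀ y ∈ orbitIn T X x, ∃ i, y ∈ orbitIn S X (r i))

/-- `S` restricts to a homeomorphism of the subset `X`. -/
def RestrictsToHomeomorph {α : Type} [TopologicalSpace α] (S : α → α) (X : Set α) : Prop :=
  ∃ e : X ≃ₜ X, ∀ x : X, (e x : α) = S (x : α)

/-- The systems `(X, S)` and `(Y, R)` are topologically conjugate. -/
def TopConj {α β : Type} [TopologicalSpace α] [TopologicalSpace β]
    (X : Set α) (S : α → α) (Y : Set β) (R : β → β) : Prop :=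
  ∃ (hS : Set.MapsTo S X X) (hR : Set.MapsTo R Y Y) (h : X ≃ₜ Y),
    ∀ x : X, h (Set.MapsTo.restrict S X X hS x) = Set.MapsTo.restrict R Y Y hR (h x)

/-- `(Y, R)` is a topological factor of `(X, S)`. -/
def IsFactorOn {α β : Type} [TopologicalSpace α] [TopologicalSpace β]
    (X : Set α) (S : α → α) (Y : Set β) (R : β → β) : Prop :=
  ∃ F : α → β, Set.MapsTo F X Y ∧ ContinuousOn F X ∧ Set.SurjOn F X Y ∧
    ∀ x ∈ X, F (S x) = R (F x)

/-- `(X, S)` is a Toeplitz flow: it is topologically conjugate to the orbit closure of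
some Toeplitz sequence over some finite alphabet, with the shift map. -/
def IsToeplitzFlow {α : Type} [TopologicalSpace α] (X : Set α) (S : α → α) : Prop :=
  ∃ (B : Type) (_ : Fintype B) (z : ℤ → B), IsToeplitz z ∧
    (letI : TopologicalSpace B := ⊥
     TopConj X S (orbitClosure z) shiftMap)

/-- `Per_p(x)`: the set of positions where `x` is periodic with period `p`. -/
def PerSet {A : Type} (x : ℤ → A) (p : ℕ) : Set ℤ :=
  {k | ∀ n : ℤ, x (k + n * (p : ℤ)) = x k}

/-- `p` is an essential period of `x`. -/
def IsEssentialPeriod {A : Type} (x : ℤ → A) (p : ℕ) : Prop :=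
  0 < p ∧ ¬ ∃ q : ℕ, 0 < q ∧ q < p ∧
    ((fun k => k + (q : ℤ)) '' PerSet x p = PerSet x p) ∧
    (∀ k ∈ PerSet x p, x (k + (q : ℤ)) = x k)

/-- A period structure for a Toeplitz sequence `x`. -/
def IsPeriodStructure {A : Type} (x : ℤ → A) (p : ℕ → ℕ) : Prop :=
  StrictMono p ∧ (∀ k, IsEssentialPeriod x (p k)) ∧
  (∀ k, p k ∣ p (k + 1)) ∧ (⋃ k, PerSet x (p k)) = Set.univ

/-- `x` is a (σ-)periodic sequence. -/
def IsPeriodicSeq {A : Type} (x : ℤ → A) : Prop :=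
  ∃ n : ℕ, 0 < n ∧ ∀ m : ℤ, x (m + (n : ℤ)) = x m

/-- `z` is the bi-infinite concatenation of the `ψ`-images of the letters of `y`,
with `ψ(y₀)` beginning at coordinate `0`. -/
def IsConcat {B C : Type} (ψ : B → List C) (y : ℤ → B) (z : ℤ → C) : Prop :=
  ∃ s : ℤ → ℤ, s 0 = 0 ∧
    (∀ n : ℤ, s (n + 1) = s n + ((ψ (y n)).length : ℤ)) ∧
    (∀ n : ℤ, ∀ j : Fin (ψ (y n)).length, z (s n + (j : ℕ)) = (ψ (y n)).get j)

/-- `p(x,n) = Σ_{i<n} p(Sⁱ x)`. -/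
def psum {X : Type} (p : X → ℕ) (S : X → X) (x : X) (n : ℕ) : ℕ :=
  ∑ i ∈ Finset.range n, p (S^[i] x)


/-- The substitution χ(a) = aab, χ(b) = abb on {a, b} = Fin 2 (a = 0, b = 1). -/
def chi : Fin 2 → List (Fin 2) := fun i => if i = 0 then [0, 0, 1] else [0, 1, 1]


/-!
Write `a, b` as `0, 1`. A point `x ∈ X_χ` is cut, at a fixed phase mod 3, into blocks `0 ? 1`
whose middle letters again form a point of `X_χ`. Iterating, the phases become the digits of a
3-adic integer `τ`, and `x n` is `0` or `1` according as the lowest nonzero 3-adic digit of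
`n - τ` is `2` or `1` (one letter being free when `n = τ`); conversely every such sequence lies
in `X_χ`. As `7 ≡ 1 (mod 3)`, multiplication by `7` preserves lowest nonzero digits, so
`n ↦ x (7n - 3)` is the sequence with address `(τ + 3) / 7`, and every address arises this way
since `7` is a 3-adic unit. So `F x = x (7 · - 3)` maps `X_χ` onto itself, and
`F (σ⁷ x) = σ (F x)` because `7 (n + 1) - 3 = (7n - 3) + 7`.
-/
lemma substPow_succ' {A : Type} (θ : A → List A) (k : ℕ) (a : A) :
    substPow θ (k + 1) a = (substPow θ k a).flatMap θ := by
  induction k generalizing a with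
  | zero => simp [substPow]
  | succ k ih =>
    have : substPow θ (k + 1) = fun b => (substPow θ k b).flatMap θ := funext ih
    show (θ a).flatMap (substPow θ (k + 1)) = ((θ a).flatMap (substPow θ k)).flatMap θ
    rw [List.flatMap_assoc, this]

lemma List.IsInfix.exists_getElem?_eq {α : Type} {l₁ l₂ : List α} (h : l₁ <:+: l₂) :
    ∃ q, l₁.length + q ≤ l₂.length ∧ ∀ i < l₁.length, l₂[i + q]? = l₁[i]? := by
  obtain ⟨q, hle, hget⟩ := List.infix_iff_getElem?.mp h
  exact ⟨q, hle, fun i hi => by rw [hget i hi, List.getElem?_eq_getElem hi]⟩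

section seqWord

variable {A : Type} (x : ℤ → A)

@[simp]
lemma length_seqWord (i : ℤ) (n : ℕ) : (seqWord x i n).length = n := by
  simp [seqWord]

lemma seqWord_getElem? {i : ℤ} {n j : ℕ} (hj : j < n) :
    (seqWord x i n)[j]? = some (x (i + j)) := by
  simp [seqWord, hj]

lemma seqWord_add (i : ℤ) (m n : ℕ) :
    seqWord x i (m + n) = seqWord x i m ++ seqWord x (i + m) n := by
  simp [seqWord, List.ofFn_add, add_assoc]

lemma seqWord_three (i : ℤ) : seqWord x i 3 = [x i, x (i + 1), x (i + 2)] := by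
  simp [seqWord, List.ofFn_succ]

lemma seqWord_isInfix_seqWord {i i₀ : ℤ} {n n₀ : ℕ} (h₁ : i₀ ≤ i) (h₂ : i + n ≤ i₀ + n₀) :
    (seqWord x i n).IsInfix (seqWord x i₀ n₀) := by
  obtain ⟨a, ha⟩ : ∃ a : ℕ, i = i₀ + a := ⟨(i - i₀).toNat, by omega⟩
  obtain ⟨b, rfl⟩ : ∃ b : ℕ, n₀ = a + (n + b) := ⟨n₀ - (a + n), by omega⟩
  rw [seqWord_add, seqWord_add, ← ha]
  exact ⟨seqWord x i₀ a, seqWord x (i + n) b, by simp⟩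

lemma List.IsInfix.exists_getElem?_eq_seqWord {w : List A} {i : ℤ} {n : ℕ}
    (h : (seqWord x i n).IsInfix w) :
    ∃ q, n + q ≤ w.length ∧ ∀ j < n, w[j + q]? = some (x (i + j)) := by
  obtain ⟨q, hle, hget⟩ := h.exists_getElem?_eq
  simp only [length_seqWord] at hle hget
  exact ⟨q, hle, fun j hj => by rw [hget j hj, seqWord_getElem? x hj]⟩

end seqWord

lemma chi_eq (c : Fin 2) : chi c = [0, c, 1] := by
  fin_cases c <;> rfl

lemma length_flatMap_chi (L : List (Fin 2)) : (L.flatMap chi).length = 3 * L.length := by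
  induction L with
  | nil => rfl
  | cons c L ih =>
    simp only [List.flatMap_cons, chi_eq, List.cons_append, List.nil_append, List.length_cons, ih]
    ring

lemma getElem?_flatMap_chi (L : List (Fin 2)) (j : ℕ) :
    (L.flatMap chi)[3 * j]? = L[j]?.map (fun _ => 0) ∧ (L.flatMap chi)[3 * j + 1]? = L[j]? ∧
      (L.flatMap chi)[3 * j + 2]? = L[j]?.map (fun _ => 1) := by
  induction L generalizing j with
  | nil => simp
  | cons c L ih =>
    cases j with
    | zero => simp [chi_eq]
    | succ j =>
      have shift : ∀ r, (L.flatMap chi)[3 * j + r]? = ((c :: L).flatMap chi)[3 * (j + 1) + r]? := by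
        intro r
        rw [List.flatMap_cons, chi_eq,
          List.getElem?_append_right (by simp only [List.length_cons, List.length_nil]; omega)]
        congr 1
        simp only [List.length_cons, List.length_nil]
        omega
      obtain ⟨h₀, h₁, h₂⟩ := ih j
      refine ⟨?_, by rw [← shift, h₁]; rfl, by rw [← shift, h₂]; rfl⟩
      rw [← Nat.add_zero (3 * (j + 1)), ← shift, Nat.add_zero, h₀]
      rfl

lemma getElem?_flatMap_chi_of_mod_eq_zero {L : List (Fin 2)} {p : ℕ} (hp : p < 3 * L.length)
    (hm : p % 3 = 0) : (L.flatMap chi)[p]? = some 0 := by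
  obtain ⟨j, rfl⟩ : ∃ j, p = 3 * j := ⟨p / 3, by omega⟩
  rw [(getElem?_flatMap_chi L j).1, List.getElem?_eq_getElem (by omega)]
  rfl

lemma getElem?_flatMap_chi_of_mod_eq_two {L : List (Fin 2)} {p : ℕ} (hp : p < 3 * L.length)
    (hm : p % 3 = 2) : (L.flatMap chi)[p]? = some 1 := by
  obtain ⟨j, rfl⟩ : ∃ j, p = 3 * j + 2 := ⟨p / 3, by omega⟩
  rw [(getElem?_flatMap_chi L j).2.2, List.getElem?_eq_getElem (by omega)]
  rfl

lemma mod_three_eq_zero_of_flatMap_chi {L : List (Fin 2)} {p : ℕ}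
    (h₀ : (L.flatMap chi)[p]? = some 0) (h₁ : (L.flatMap chi)[p + 2]? = some 1) :
    p % 3 = 0 := by
  have hp : p + 2 < 3 * L.length := by
    rw [← length_flatMap_chi]; exact (List.getElem?_eq_some_iff.mp h₁).1
  by_contra hm
  rcases (by omega : p % 3 = 1 ∨ p % 3 = 2) with hm | hm
  · simp [getElem?_flatMap_chi_of_mod_eq_zero hp (by omega)] at h₁
  · simp [getElem?_flatMap_chi_of_mod_eq_two (by omega : p < 3 * L.length) hm] at h₀

lemma isInfix_of_flatMap_chi_isInfix {v L : List (Fin 2)}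
    (h : (v.flatMap chi).IsInfix (L.flatMap chi)) : v.IsInfix L := by
  by_cases hv : v = []
  · subst hv
    exact List.nil_infix
  have hv : 0 < v.length := List.length_pos_iff.mpr hv
  obtain ⟨q, hle, hget⟩ := h.exists_getElem?_eq
  rw [length_flatMap_chi] at hget
  rw [length_flatMap_chi, length_flatMap_chi] at hle
  have hq : q % 3 = 0 := by
    refine mod_three_eq_zero_of_flatMap_chi (L := L) ?_ ?_
    · rw [← Nat.zero_add q, hget 0 (by omega), getElem?_flatMap_chi_of_mod_eq_zero (by omega) rfl]
    · rw [Nat.add_comm, hget 2 (by omega), getElem?_flatMap_chi_of_mod_eq_two (by omega) rfl]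
  obtain ⟨s, rfl⟩ : ∃ s, q = 3 * s := ⟨q / 3, by omega⟩
  refine List.infix_iff_getElem?.mpr ⟨s, by omega, fun j hj => ?_⟩
  rw [← List.getElem?_eq_getElem hj, ← (getElem?_flatMap_chi v j).2.1, ← hget _ (by omega),
    ← (getElem?_flatMap_chi L (j + s)).2.1]
  congr 1
  ring

lemma exists_isInfix_flatMap_substPow {x : ℤ → Fin 2} (hx : x ∈ substShift chi) (i : ℤ) (n : ℕ) :
    ∃ k a, (seqWord x i n).IsInfix ((substPow chi k a).flatMap chi) := by
  obtain ⟨k, a, h⟩ := hx i n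
  cases k with
  | zero => exact ⟨0, 0, h.trans (by fin_cases a <;> decide)⟩
  | succ k => exact ⟨k, a, substPow_succ' chi k a ▸ h⟩

lemma exists_window {x : ℤ → Fin 2} (hx : x ∈ substShift chi) (i : ℤ) (n : ℕ) :
    ∃ (L : List (Fin 2)) (q : ℕ), n + q ≤ 3 * L.length ∧
      ∀ j < n, (L.flatMap chi)[j + q]? = some (x (i + j)) := by
  obtain ⟨k, a, h⟩ := exists_isInfix_flatMap_substPow hx i n
  obtain ⟨q, hle, hget⟩ := h.exists_getElem?_eq_seqWord
  exact ⟨_, q, length_flatMap_chi _ ▸ hle, hget⟩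

lemma seqWord_three_mul_add_eq_flatMap {y : ℤ → Fin 2} {c : ℤ}
    (h₀ : ∀ m, y (3 * m + c) = 0) (h₂ : ∀ m, y (3 * m + c + 2) = 1) (a : ℤ) (L : ℕ) :
    seqWord y (3 * a + c) (3 * L) = (seqWord (fun m => y (3 * m + c + 1)) a L).flatMap chi := by
  induction L with
  | zero => rfl
  | succ L ih =>
    have hpos : 3 * a + c + ((3 * L : ℕ) : ℤ) = 3 * (a + L) + c := by push_cast; ring
    rw [Nat.mul_succ, seqWord_add, seqWord_add _ a L 1, List.flatMap_append, ← ih, hpos,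
      seqWord_three, h₀, h₂]
    simp [seqWord, chi_eq]

lemma desubst_mem_substShift {x : ℤ → Fin 2} (hx : x ∈ substShift chi) {c : ℤ}
    (h₀ : ∀ m, x (3 * m + c) = 0) (h₂ : ∀ m, x (3 * m + c + 2) = 1) :
    (fun m => x (3 * m + c + 1)) ∈ substShift chi := by
  intro i n
  obtain ⟨k, a, h⟩ := exists_isInfix_flatMap_substPow hx (3 * i + c) (3 * n)
  rw [seqWord_three_mul_add_eq_flatMap h₀ h₂] at h
  exact ⟨k, a, isInfix_of_flatMap_chi_isInfix h⟩

lemma exists_isInfix_substPow_of_desubst {y : ℤ → Fin 2} {c : ℤ}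
    (h₀ : ∀ m, y (3 * m + c) = 0) (h₂ : ∀ m, y (3 * m + c + 2) = 1) {n : ℕ}
    (hy : ∀ i, ∃ k a,
      (seqWord (fun m => y (3 * m + c + 1)) i ((n + 4) / 3)).IsInfix (substPow chi k a))
    (i : ℤ) : ∃ k a, (seqWord y i n).IsInfix (substPow chi k a) := by
  obtain ⟨k, a, h⟩ := hy ((i - c) / 3)
  refine ⟨k + 1, a, (seqWord_isInfix_seqWord y (i₀ := 3 * ((i - c) / 3) + c)
    (n₀ := 3 * ((n + 4) / 3)) (by omega) (by push_cast; omega)).trans ?_⟩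
  rw [seqWord_three_mul_add_eq_flatMap h₀ h₂, substPow_succ']
  exact h.flatMap chi

lemma isInfix_substPow_chi_of_length_le_two {w : List (Fin 2)} (h : w.length ≤ 2) :
    w.IsInfix (substPow chi 2 0) := by
  match w, h with
  | [], _ => exact List.nil_infix
  | [a], _ => fin_cases a <;> decide
  | [a, b], _ => fin_cases a <;> fin_cases b <;> decide

lemma exists_phase {x : ℤ → Fin 2} (hx : x ∈ substShift chi) (i : ℤ) (n : ℕ) :
    ∃ r : ℤ, ∀ p, i ≤ p → p + 2 < i + n → (x p = 0 ∧ x (p + 2) = 1 ↔ 3 ∣ p - r) := by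
  obtain ⟨L, q, hle, hget⟩ := exists_window hx i n
  refine ⟨i - q, fun p hp₁ hp₂ => ?_⟩
  obtain ⟨j, rfl⟩ : ∃ j : ℕ, p = i + j := ⟨(p - i).toNat, by omega⟩
  have e₀ := hget j (by omega)
  have e₂ := hget (j + 2) (by omega)
  rw [show i + ((j + 2 : ℕ) : ℤ) = i + j + 2 by push_cast; ring, add_right_comm] at e₂
  rw [show 3 ∣ i + j - (i - q) ↔ (j + q) % 3 = 0 by omega]
  constructor
  · rintro ⟨h₀, h₂⟩
    exact mod_three_eq_zero_of_flatMap_chi (h₀ ▸ e₀) (h₂ ▸ e₂)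
  · intro hm
    rw [getElem?_flatMap_chi_of_mod_eq_zero (by omega) hm] at e₀
    rw [getElem?_flatMap_chi_of_mod_eq_two (by omega) (by omega)] at e₂
    exact ⟨(Option.some_injective _ e₀).symm, (Option.some_injective _ e₂).symm⟩

lemma exists_cut {x : ℤ → Fin 2} (hx : x ∈ substShift chi) :
    ∃ c, ∀ m, x (3 * m + c) = 0 ∧ x (3 * m + c + 2) = 1 := by
  obtain ⟨r₀, hr₀⟩ := exists_phase hx 0 5
  refine ⟨r₀ % 3, fun m => ?_⟩
  have hc := (hr₀ (r₀ % 3) (by omega) (by omega)).2 (by omega)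
  obtain ⟨r, hr⟩ := exists_phase hx (-3 * |m|) (6 * m.natAbs + 5)
  have habs : (m.natAbs : ℤ) = |m| := Int.natCast_natAbs m
  have hm : -|m| ≤ m ∧ m ≤ |m| := abs_le.mp le_rfl
  -- the window around `0` and `3 * m` has the phase that the pattern at `r₀ % 3` detects
  have hcr := (hr (r₀ % 3) (by omega) (by omega)).1 hc
  exact (hr (3 * m + r₀ % 3) (by omega) (by omega)).2 (by omega)

/-- A 3-adic integer, given by its integer truncations: `τ k` is its residue modulo `3 ^ k`. -/
def IsThreeAdic (τ : ℕ → ℤ) : Prop := ∀ k, (3 : ℤ) ^ k ∣ τ (k + 1) - τ k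

/-- The point of `X_χ` with 3-adic address `τ`: `toeplitzPoint τ β n` is `0` or `1` according
as the lowest nonzero 3-adic digit of `n - τ` is `2` or `1`, and `β` if `n = τ` 3-adically. -/
def toeplitzPoint (τ : ℕ → ℤ) (β : Fin 2) (n : ℤ) : Fin 2 :=
  if h : ∃ k, ¬ (3 : ℤ) ^ (k + 1) ∣ n - τ (k + 1) then
    if (3 : ℤ) ^ (Nat.find h + 1) ∣ n - τ (Nat.find h + 1) + 3 ^ Nat.find h then 0 else 1
  else β

section toeplitzPoint

variable {τ σ : ℕ → ℤ} (β : Fin 2)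

lemma toeplitzPoint_eq_of_lowest_digit {n : ℤ} (k : ℕ)
    (hlow : ∀ j < k, (3 : ℤ) ^ (j + 1) ∣ n - τ (j + 1)) (hk : ¬ (3 : ℤ) ^ (k + 1) ∣ n - τ (k + 1)) :
    toeplitzPoint τ β n = if (3 : ℤ) ^ (k + 1) ∣ n - τ (k + 1) + 3 ^ k then 0 else 1 := by
  have h : ∃ k, ¬ (3 : ℤ) ^ (k + 1) ∣ n - τ (k + 1) := ⟨k, hk⟩
  have hfind : Nat.find h = k :=
    (Nat.find_eq_iff h).mpr ⟨hk, fun j hj => not_not.mpr (hlow j hj)⟩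
  rw [toeplitzPoint, dif_pos h, hfind]

lemma toeplitzPoint_of_forall_dvd {n : ℤ} (h : ∀ k, (3 : ℤ) ^ (k + 1) ∣ n - τ (k + 1)) :
    toeplitzPoint τ β n = β := by
  rw [toeplitzPoint, dif_neg (not_exists_not.mpr h)]

lemma toeplitzPoint_of_three_dvd_add_one {n : ℤ} (h : 3 ∣ n - τ 1 + 1) :
    toeplitzPoint τ β n = 0 := by
  rw [toeplitzPoint_eq_of_lowest_digit β 0 (by omega) (by simp only [zero_add, pow_one]; omega),
    if_pos (by simpa using h)]

lemma toeplitzPoint_of_three_dvd_sub_one {n : ℤ} (h : 3 ∣ n - τ 1 - 1) :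
    toeplitzPoint τ β n = 1 := by
  rw [toeplitzPoint_eq_of_lowest_digit β 0 (by omega) (by simp only [zero_add, pow_one]; omega),
    if_neg (by simp only [zero_add, pow_one, pow_zero]; omega)]

/-- `n - τ` has `d` more trailing zero digits than `n' - σ`, and the same lowest nonzero digit. -/
lemma toeplitzPoint_congr {n n' : ℤ} (d : ℕ)
    (hlow : ∀ j < d, (3 : ℤ) ^ (j + 1) ∣ n - τ (j + 1))
    (hval : ∀ k, (3 : ℤ) ^ (k + d + 1) ∣ n - τ (k + d + 1) ↔ (3 : ℤ) ^ (k + 1) ∣ n' - σ (k + 1))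
    (hdigit : ∀ k, (3 : ℤ) ^ (k + d + 1) ∣ n - τ (k + d + 1) + 3 ^ (k + d) ↔
      (3 : ℤ) ^ (k + 1) ∣ n' - σ (k + 1) + 3 ^ k) :
    toeplitzPoint τ β n = toeplitzPoint σ β n' := by
  have lift : ∀ k, (∀ j < k, (3 : ℤ) ^ (j + 1) ∣ n' - σ (j + 1)) →
      ∀ j < k + d, (3 : ℤ) ^ (j + 1) ∣ n - τ (j + 1) := by
    intro k hk j hj
    rcases lt_or_ge j d with hjd | hjd
    · exact hlow j hjd
    · obtain ⟨i, rfl⟩ := Nat.exists_eq_add_of_le' hjd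
      exact (hval i).mpr (hk i (by omega))
  by_cases h : ∃ k, ¬ (3 : ℤ) ^ (k + 1) ∣ n' - σ (k + 1)
  · have hmin : ∀ j < Nat.find h, (3 : ℤ) ^ (j + 1) ∣ n' - σ (j + 1) :=
      fun j hj => not_not.mp (Nat.find_min h hj)
    rw [toeplitzPoint_eq_of_lowest_digit β _ hmin (Nat.find_spec h),
      toeplitzPoint_eq_of_lowest_digit β _ (lift _ hmin) (mt (hval _).mp (Nat.find_spec h)),
      if_congr (hdigit _) rfl rfl]
  · replace h := not_exists_not.mp h
    rw [toeplitzPoint_of_forall_dvd β h, toeplitzPoint_of_forall_dvd β fun j =>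
      lift (j + 1) (fun i _ => h i) j (by omega)]

end toeplitzPoint

lemma three_pow_succ_dvd_three_mul_iff (k : ℕ) (z : ℤ) :
    (3 : ℤ) ^ (k + 1) ∣ 3 * z ↔ (3 : ℤ) ^ k ∣ z := by
  rw [pow_succ', mul_dvd_mul_iff_left three_ne_zero]

namespace IsThreeAdic

variable {τ : ℕ → ℤ}

lemma pow_dvd_sub (hτ : IsThreeAdic τ) {j k : ℕ} (hjk : j ≤ k) : (3 : ℤ) ^ j ∣ τ k - τ j := by
  induction k, hjk using Nat.le_induction with
  | base => simp
  | succ k hjk ih =>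
    rw [← sub_add_sub_cancel]
    exact dvd_add ((pow_dvd_pow 3 hjk).trans (hτ k)) ih

lemma mul_sub_const (hτ : IsThreeAdic τ) (a b : ℤ) : IsThreeAdic fun k => a * τ k - b := fun k => by
  simpa [← mul_sub] using (hτ k).mul_left a

end IsThreeAdic

/-- The 3-adic integer `(τ - τ₁) / 3`. -/
def quotThree (τ : ℕ → ℤ) (k : ℕ) : ℤ := (τ (k + 1) - τ 1) / 3

lemma three_mul_quotThree {τ : ℕ → ℤ} (hτ : IsThreeAdic τ) (k : ℕ) :
    3 * quotThree τ k = τ (k + 1) - τ 1 :=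
  Int.mul_ediv_cancel' (by simpa using hτ.pow_dvd_sub (Nat.le_add_left 1 k))

lemma IsThreeAdic.quotThree {τ : ℕ → ℤ} (hτ : IsThreeAdic τ) : IsThreeAdic (quotThree τ) := by
  intro k
  rw [← three_pow_succ_dvd_three_mul_iff, mul_sub, three_mul_quotThree hτ,
    three_mul_quotThree hτ, sub_sub_sub_cancel_right]
  exact hτ (k + 1)

lemma toeplitzPoint_three_mul_add {τ : ℕ → ℤ} (hτ : IsThreeAdic τ) (β : Fin 2) (m : ℤ) :
    toeplitzPoint τ β (3 * m + τ 1) = toeplitzPoint (quotThree τ) β m := by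
  have key : ∀ j, 3 * m + τ 1 - τ (j + 1) = 3 * (m - quotThree τ j) := fun j => by
    rw [mul_sub, three_mul_quotThree hτ]; ring
  refine toeplitzPoint_congr β 1 (fun j hj => ?_) (fun k => ?_) (fun k => ?_)
  · obtain rfl : j = 0 := by omega
    rw [key]
    exact dvd_mul_right _ _
  · rw [key, three_pow_succ_dvd_three_mul_iff]
  · rw [key, pow_succ' 3 (k + 1), pow_succ' 3 k, ← mul_add, mul_dvd_mul_iff_left three_ne_zero]

lemma toeplitzPoint_mem_substShift {τ : ℕ → ℤ} (hτ : IsThreeAdic τ) (β : Fin 2) :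
    toeplitzPoint τ β ∈ substShift chi := by
  intro i n
  induction n using Nat.strong_induction_on generalizing τ i with
  | _ n ih =>
    rcases le_or_gt n 2 with hn | hn
    · exact ⟨2, 0, isInfix_substPow_chi_of_length_le_two (by simpa using hn)⟩
    have hmid : (fun m => toeplitzPoint τ β (3 * m + (τ 1 - 1) + 1)) =
        toeplitzPoint (quotThree τ) β := by
      funext m
      rw [add_assoc, sub_add_cancel, toeplitzPoint_three_mul_add hτ]
    refine exists_isInfix_substPow_of_desubst (c := τ 1 - 1)
      (fun m => toeplitzPoint_of_three_dvd_add_one β ⟨m, by ring⟩)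
      (fun m => toeplitzPoint_of_three_dvd_sub_one β ⟨m, by ring⟩) ?_ i
    rw [hmid]
    exact fun j => ih _ (by omega) hτ.quotThree j

def cut (x : ℤ → Fin 2) : ℤ :=
  if h : x ∈ substShift chi then Classical.choose (exists_cut h) else 0

lemma cut_spec {x : ℤ → Fin 2} (hx : x ∈ substShift chi) (m : ℤ) :
    x (3 * m + cut x) = 0 ∧ x (3 * m + cut x + 2) = 1 := by
  rw [cut, dif_pos hx]
  exact Classical.choose_spec (exists_cut hx) m

def desubst (x : ℤ → Fin 2) (m : ℤ) : Fin 2 := x (3 * m + cut x + 1)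

lemma desubst_mem {x : ℤ → Fin 2} (hx : x ∈ substShift chi) : desubst x ∈ substShift chi :=
  desubst_mem_substShift hx (fun m => (cut_spec hx m).1) (fun m => (cut_spec hx m).2)

def address : (ℤ → Fin 2) → ℕ → ℤ
  | _, 0 => 0
  | x, k + 1 => cut x + 1 + 3 * address (desubst x) k

lemma address_one (x : ℤ → Fin 2) : address x 1 = cut x + 1 := by
  simp [address]

lemma isThreeAdic_address (x : ℤ → Fin 2) : IsThreeAdic (address x) := by
  intro k
  induction k generalizing x with
  | zero => simp
  | succ k ih =>
    show (3 : ℤ) ^ (k + 1) ∣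
      cut x + 1 + 3 * address (desubst x) (k + 1) - (cut x + 1 + 3 * address (desubst x) k)
    rw [add_sub_add_left_eq_sub, ← mul_sub, three_pow_succ_dvd_three_mul_iff]
    exact ih _

lemma quotThree_address (x : ℤ → Fin 2) : quotThree (address x) = address (desubst x) := by
  funext k
  simp [quotThree, address]

lemma apply_eq_toeplitzPoint_of_not_three_dvd {x : ℤ → Fin 2} (hx : x ∈ substShift chi)
    (β : Fin 2) {n : ℤ} (hn : ¬ 3 ∣ n - address x 1) : x n = toeplitzPoint (address x) β n := by
  rw [address_one] at hn
  rcases (by omega : (n - cut x - 1) % 3 = 1 ∨ (n - cut x - 1) % 3 = 2) with h | h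
  · obtain ⟨m, rfl⟩ : ∃ m, n = 3 * m + cut x + 2 := ⟨(n - cut x - 2) / 3, by omega⟩
    rw [(cut_spec hx m).2, toeplitzPoint_of_three_dvd_sub_one β (by rw [address_one]; omega)]
  · obtain ⟨m, rfl⟩ : ∃ m, n = 3 * m + cut x := ⟨(n - cut x) / 3, by omega⟩
    rw [(cut_spec hx m).1, toeplitzPoint_of_three_dvd_add_one β (by rw [address_one]; omega)]

lemma apply_eq_toeplitzPoint_address {x : ℤ → Fin 2} (hx : x ∈ substShift chi) (β : Fin 2)
    (k : ℕ) {n : ℤ} (hn : ¬ (3 : ℤ) ^ (k + 1) ∣ n - address x (k + 1)) :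
    x n = toeplitzPoint (address x) β n := by
  induction k generalizing x n with
  | zero => exact apply_eq_toeplitzPoint_of_not_three_dvd hx β (by simpa using hn)
  | succ k ih =>
    by_cases h : 3 ∣ n - address x 1
    · obtain ⟨m, hm⟩ := h
      obtain rfl : n = 3 * m + address x 1 := by linarith
      have hdiff : 3 * m + address x 1 - address x (k + 1 + 1) =
          3 * (m - address (desubst x) (k + 1)) := by
        rw [address_one, address]; ring
      rw [hdiff, three_pow_succ_dvd_three_mul_iff] at hn
      rw [toeplitzPoint_three_mul_add (isThreeAdic_address x), quotThree_address, address_one,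
        ← add_assoc]
      exact ih (desubst_mem hx) hn
    · exact apply_eq_toeplitzPoint_of_not_three_dvd hx β h

lemma eq_of_forall_three_pow_dvd {τ : ℕ → ℤ} {n n' : ℤ}
    (h : ∀ k, (3 : ℤ) ^ (k + 1) ∣ n - τ (k + 1)) (h' : ∀ k, (3 : ℤ) ^ (k + 1) ∣ n' - τ (k + 1)) :
    n = n' := by
  set N := (n - n').natAbs
  have hdvd : (3 : ℤ) ^ (N + 1) ∣ n - n' := by
    simpa using dvd_sub (h N) (h' N)
  have hlt : N < ((3 : ℤ) ^ (N + 1)).natAbs := by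
    rw [Int.natAbs_pow]
    exact (Nat.lt_pow_self (by norm_num)).trans (Nat.pow_lt_pow_right (by norm_num) N.lt_succ_self)
  exact sub_eq_zero.mp (Int.eq_zero_of_dvd_of_natAbs_lt_natAbs hdvd hlt)

theorem exists_eq_toeplitzPoint {x : ℤ → Fin 2} (hx : x ∈ substShift chi) :
    ∃ τ β, IsThreeAdic τ ∧ x = toeplitzPoint τ β := by
  obtain ⟨β, hβ⟩ : ∃ β : Fin 2,
      ∀ n, (∀ k, (3 : ℤ) ^ (k + 1) ∣ n - address x (k + 1)) → x n = β := by
    by_cases hs : ∃ n₀, ∀ k, (3 : ℤ) ^ (k + 1) ∣ n₀ - address x (k + 1)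
    · obtain ⟨n₀, h₀⟩ := hs
      exact ⟨x n₀, fun n hn => by rw [eq_of_forall_three_pow_dvd hn h₀]⟩
    · exact ⟨0, fun n hn => (hs ⟨n, hn⟩).elim⟩
  refine ⟨address x, β, isThreeAdic_address x, funext fun n => ?_⟩
  by_cases hn : ∃ k, ¬ (3 : ℤ) ^ (k + 1) ∣ n - address x (k + 1)
  · obtain ⟨k, hk⟩ := hn
    exact apply_eq_toeplitzPoint_address hx β k hk
  · replace hn := not_exists_not.mp hn
    rw [toeplitzPoint_of_forall_dvd β hn, hβ n hn]

/-- Multiplication by `a ≡ 1 (mod 3)` preserves lowest nonzero 3-adic digits. -/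
lemma toeplitzPoint_mul_sub {τ σ : ℕ → ℤ} {a : ℤ} (ha : 3 ∣ a - 1) (b : ℤ) (β : Fin 2)
    (hστ : ∀ k, (3 : ℤ) ^ k ∣ a * σ k - b - τ k) (n : ℤ) :
    toeplitzPoint τ β (a * n - b) = toeplitzPoint σ β n := by
  have hcancel : ∀ k z, (3 : ℤ) ^ k ∣ a * z ↔ (3 : ℤ) ^ k ∣ z := fun k z =>
    ⟨(IsCoprime.pow_left ⟨-((a - 1) / 3), 1, by omega⟩).dvd_of_dvd_mul_left, (·.mul_left a)⟩
  refine toeplitzPoint_congr β 0 (by simp) (fun k => ?_) (fun k => ?_)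
  · rw [show a * n - b - τ (k + 0 + 1) = a * (n - σ (k + 1)) + (a * σ (k + 1) - b - τ (k + 1)) by
      ring, dvd_add_left (hστ _), hcancel]
  · have hk : (3 : ℤ) ^ (k + 1) ∣ (a - 1) * 3 ^ k := pow_succ' (3 : ℤ) k ▸ mul_dvd_mul ha dvd_rfl
    rw [show a * n - b - τ (k + 0 + 1) + 3 ^ (k + 0) = a * (n - σ (k + 1) + 3 ^ k) +
      ((a * σ (k + 1) - b - τ (k + 1)) - (a - 1) * 3 ^ k) by ring,
      dvd_add_left (dvd_sub (hστ _) hk), hcancel]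

lemma IsThreeAdic.exists_mul_sub {τ : ℕ → ℤ} (hτ : IsThreeAdic τ) {a : ℤ} (ha : IsCoprime 3 a)
    (b : ℤ) : ∃ σ, IsThreeAdic σ ∧ ∀ k, (3 : ℤ) ^ k ∣ a * σ k - b - τ k := by
  choose u v huv using fun k => ha.pow_left (m := k)
  have hσ : ∀ k, (3 : ℤ) ^ k ∣ a * (v k * (τ k + b)) - b - τ k :=
    fun k => ⟨-u k * (τ k + b), by linear_combination (τ k + b) * huv k⟩
  refine ⟨fun k => v k * (τ k + b), fun k => ?_, hσ⟩
  refine ha.pow_left.dvd_of_dvd_mul_left ?_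
  rw [show a * (v (k + 1) * (τ (k + 1) + b) - v k * (τ k + b)) =
    (a * (v (k + 1) * (τ (k + 1) + b)) - b - τ (k + 1)) - (a * (v k * (τ k + b)) - b - τ k) +
      (τ (k + 1) - τ k) by ring]
  exact dvd_add (dvd_sub ((pow_dvd_pow 3 k.le_succ).trans (hσ _)) (hσ k)) (hτ k)

lemma shiftMap_iterate_apply {A : Type} (m : ℕ) (x : ℤ → A) (n : ℤ) :
    shiftMap^[m] x n = x (n + m) := by
  induction m generalizing x with
  | zero => simp
  | succ m ih =>
    rw [Function.iterate_succ_apply, ih, shiftMap]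
    push_cast
    ring_nf

/-- (X_χ, σ^1) is a topological factor of (X_χ, σ^7). -/
theorem statement16 :
    IsFactorOn (substShift chi) (shiftMap^[7]) (substShift chi) (shiftMap^[1]) := by
  have h7 : (3 : ℤ) ∣ 7 - 1 := by norm_num
  refine ⟨fun x n => x (7 * n - 3), ?_, (continuous_pi fun n => continuous_apply _).continuousOn,
    ?_, fun x _ => funext fun n => ?_⟩
  · intro x hx
    obtain ⟨τ, β, hτ, rfl⟩ := exists_eq_toeplitzPoint hx
    obtain ⟨σ, hσ, hστ⟩ := hτ.exists_mul_sub (a := 7) ⟨-2, 1, by norm_num⟩ 3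
    simpa only [toeplitzPoint_mul_sub h7 3 β hστ] using toeplitzPoint_mem_substShift hσ β
  · intro y hy
    obtain ⟨υ, β, hυ, rfl⟩ := exists_eq_toeplitzPoint hy
    refine ⟨_, toeplitzPoint_mem_substShift (hυ.mul_sub_const 7 3) β, funext fun n => ?_⟩
    exact toeplitzPoint_mul_sub h7 3 β (fun k => by simp) n
  · simp only [shiftMap_iterate_apply]
    ring_nf

end
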